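/- Common generalization of Ramanujan's Entry 1.6.6 and its phi(−q) companion: Let q, t, s be complex numbers with |q| < 1, |q^t| < 1 and |a q^s| < 1 (principal complex powers), and let a be a complex number such that 1 + a·q^s·(q^t)^j ≠ 0 for every nonnegative integer j and such that (−aq^s;q^t)_∞ ≠ 0. Then ∑_{j=0}^∞ (−1)^j (q^t)^{j(j+1)/2} / [(q^t;q^t)_j · (1 + a·q^s·(q^t)^j)] = (q^t;q^t)_∞ / (−aq^s;q^t)_∞. -/

import Mathlib

/-!
With `Q = q ^ t` and `z = -a q ^ s`, expand `1 / (1 - z Q ^ j)` as a geometric series and swap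
the two summations. Since `j (j + 1) / 2 = C(j, 2) + j`, the inner sum over `j` is Euler's series
`∑ (-1)^j Q^C(j,2) w^j / (Q;Q)_j = (w;Q)_∞` at `w = Q^(m+1)`, i.e. `(Q;Q)_∞ / (Q;Q)_m`, and what
remains is Euler's other series `∑ z^m / (Q;Q)_m = 1 / (z;Q)_∞`.

Both Euler identities come from a functional equation in `w ↦ Q w`: iterating it `n` times
produces `(w;Q)_n`, and letting `n → ∞` uses only that the series tends to `1` at `0`.
-/

open Complex

/-- Finite q-Pochhammer symbol `(A;Q)_k = ∏_{r=0}^{k-1} (1 - A Q^r)`. -/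
noncomputable def qp (A Q : ℂ) (k : ℕ) : ℂ := ∏ r ∈ Finset.range k, (1 - A * Q ^ r)

/-- Infinite q-Pochhammer symbol `(A;Q)_∞ = ∏_{r=0}^{∞} (1 - A Q^r)`. -/
noncomputable def qpInf (A Q : ℂ) : ℂ := ∏' r : ℕ, (1 - A * Q ^ r)

/-- q-Pochhammer symbol with (possibly non-integer) index:
`(A;Q)_{c k} := (A;Q)_∞ / (A R^k;Q)_∞` where `R = Q^c`. -/
noncomputable def qpc (A Q R : ℂ) (k : ℕ) : ℂ := qpInf A Q / qpInf (A * R ^ k) Q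

/-- q-Pochhammer symbol with shifted (possibly non-integer) index:
`(A;Q)_{c k + 1} := (A;Q)_∞ / (A Q R^k;Q)_∞` where `R = Q^c`. -/
noncomputable def qpc1 (A Q R : ℂ) (k : ℕ) : ℂ := qpInf A Q / qpInf (A * Q * R ^ k) Q

open Filter Topology

section QPochhammer

variable {A Q : ℂ}

lemma qp_succ (A Q : ℂ) (k : ℕ) : qp A Q (k + 1) = qp A Q k * (1 - A * Q ^ k) :=
  Finset.prod_range_succ _ _

lemma norm_pow_mul_lt (hQ : ‖Q‖ ≤ 1) (hA : ‖A‖ < 1) (n : ℕ) : ‖Q ^ n * A‖ < 1 := by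
  rw [norm_mul, norm_pow]
  exact (mul_le_of_le_one_left (norm_nonneg A) (pow_le_one₀ (norm_nonneg Q) hQ)).trans_lt hA

lemma one_sub_mul_pow_ne_zero (hQ : ‖Q‖ ≤ 1) (hA : ‖A‖ < 1) (r : ℕ) : 1 - A * Q ^ r ≠ 0 := by
  rw [sub_ne_zero, mul_comm]
  exact fun h => by simpa [← h] using norm_pow_mul_lt hQ hA r

lemma qp_ne_zero (hQ : ‖Q‖ ≤ 1) (hA : ‖A‖ < 1) (k : ℕ) : qp A Q k ≠ 0 :=
  Finset.prod_ne_zero_iff.2 fun r _ => one_sub_mul_pow_ne_zero hQ hA r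

lemma summable_norm_neg_mul_pow (hQ : ‖Q‖ < 1) (A : ℂ) :
    Summable fun r : ℕ => ‖-(A * Q ^ r)‖ := by
  simpa only [norm_neg, norm_mul, norm_pow] using
    (summable_geometric_of_lt_one (norm_nonneg Q) hQ).mul_left ‖A‖

lemma hasProd_qpInf (hQ : ‖Q‖ < 1) (A : ℂ) :
    HasProd (fun r : ℕ => 1 - A * Q ^ r) (qpInf A Q) := by
  rw [qpInf]
  simpa only [← sub_eq_add_neg] using
    (multipliable_one_add_of_summable (summable_norm_neg_mul_pow hQ A)).hasProd

lemma tendsto_qp (hQ : ‖Q‖ < 1) (A : ℂ) : Tendsto (qp A Q) atTop (𝓝 (qpInf A Q)) :=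
  (hasProd_qpInf hQ A).tendsto_prod_nat

lemma qpInf_ne_zero (hQ : ‖Q‖ < 1) (hA : ‖A‖ < 1) : qpInf A Q ≠ 0 := by
  rw [qpInf]
  simpa only [← sub_eq_add_neg] using tprod_one_add_ne_zero_of_summable
    (fun r => by simpa only [← sub_eq_add_neg] using one_sub_mul_pow_ne_zero hQ.le hA r)
    (summable_norm_neg_mul_pow hQ A)

lemma qpInf_eq_qp_mul_qpInf (hQ : ‖Q‖ < 1) (A : ℂ) (k : ℕ) :
    qpInf A Q = qp A Q k * qpInf (A * Q ^ k) Q := by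
  have htail : Multipliable fun r : ℕ => 1 - A * Q ^ (r + k) :=
    (hasProd_qpInf hQ (A * Q ^ k)).multipliable.congr fun r => by ring
  calc qpInf A Q = qp A Q k * ∏' r : ℕ, (1 - A * Q ^ (r + k)) := by
        rw [qp, qpInf, Multipliable.prod_mul_tprod_nat_mul' (f := fun r => 1 - A * Q ^ r) htail]
    _ = qp A Q k * qpInf (A * Q ^ k) Q := by
        rw [qpInf]
        congr 1
        exact tprod_congr fun r => by ring

lemma exists_norm_inv_qp_le (hQ : ‖Q‖ < 1) (hA : ‖A‖ < 1) : ∃ B, ∀ k, ‖(qp A Q k)⁻¹‖ ≤ B := by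
  obtain ⟨B, hB⟩ := isBounded_iff_forall_norm_le.1 <|
    Metric.isBounded_range_of_tendsto _ ((tendsto_qp hQ A).inv₀ (qpInf_ne_zero hQ hA))
  exact ⟨B, fun k => hB _ ⟨k, rfl⟩⟩

end QPochhammer

section PowerSeries

variable {c d : ℕ → ℂ} {B : ℝ} {w : ℂ}

lemma summable_mul_pow_of_norm_le (hc : ∀ m, ‖c m‖ ≤ B) (hw : ‖w‖ < 1) :
    Summable fun m => c m * w ^ m :=
  .of_norm_bounded ((summable_geometric_of_lt_one (norm_nonneg w) hw).mul_left B) fun m => by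
    rw [norm_mul, norm_pow]
    exact mul_le_mul_of_nonneg_right (hc m) (by positivity)

lemma tendsto_tsum_mul_pow_nhds_zero (hc : ∀ m, ‖c m‖ ≤ B) :
    Tendsto (fun w => ∑' m, c m * w ^ m) (𝓝 0) (𝓝 (c 0)) := by
  have hterm (m : ℕ) : Tendsto (fun w : ℂ => c m * w ^ m) (𝓝 0) (𝓝 (c m * 0 ^ m)) :=
    ((continuous_pow m).tendsto 0).const_mul (c m)
  have hbound : ∀ᶠ w : ℂ in 𝓝 0, ∀ m, ‖c m * w ^ m‖ ≤ B * (1 / 2) ^ m := by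
    filter_upwards [Metric.closedBall_mem_nhds (0 : ℂ) (by norm_num : (0 : ℝ) < 1 / 2)] with w hw m
    rw [mem_closedBall_zero_iff] at hw
    rw [norm_mul, norm_pow]
    exact mul_le_mul (hc m) (pow_le_pow_left₀ (norm_nonneg w) hw m) (by positivity)
      ((norm_nonneg _).trans (hc m))
  have := tendsto_tsum_of_dominated_convergence (summable_geometric_two.mul_left B) hterm hbound
  rwa [tsum_eq_single 0 fun m hm => by simp [hm], pow_zero, mul_one] at this

lemma one_sub_mul_tsum_mul_pow (hc : Summable fun m => c m * w ^ m) (h0 : d 0 = c 0)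
    (hsucc : ∀ m, d (m + 1) = c (m + 1) - c m) :
    (1 - w) * ∑' m, c m * w ^ m = ∑' m, d m * w ^ m := by
  refine (HasSum.tsum_eq ?_).symm
  rw [← hasSum_nat_add_iff' 1]
  convert ((hasSum_nat_add_iff' 1).2 hc.hasSum).sub (hc.hasSum.mul_left w) using 1
  · ext m
    rw [hsucc]
    ring
  · simp only [Finset.range_one, Finset.sum_singleton, h0, pow_zero, mul_one]
    ring

end PowerSeries

section FunctionalEquation

variable {Q w : ℂ} {g : ℂ → ℂ}

lemma map_pow_mul_eq_qp_mul (hQ : ‖Q‖ ≤ 1)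
    (hg : ∀ w, ‖w‖ < 1 → g (Q * w) = (1 - w) * g w) (hw : ‖w‖ < 1) (n : ℕ) :
    g (Q ^ n * w) = qp w Q n * g w := by
  induction n with
  | zero => simp [qp]
  | succ n ih =>
    rw [pow_succ', mul_assoc, hg _ (norm_pow_mul_lt hQ hw n), ih, qp_succ]
    ring

lemma eq_qp_mul_map_pow_mul (hQ : ‖Q‖ ≤ 1)
    (hg : ∀ w, ‖w‖ < 1 → g w = (1 - w) * g (Q * w)) (hw : ‖w‖ < 1) (n : ℕ) :
    g w = qp w Q n * g (Q ^ n * w) := by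
  induction n with
  | zero => simp [qp]
  | succ n ih =>
    rw [ih, hg _ (norm_pow_mul_lt hQ hw n), qp_succ, ← mul_assoc Q, ← pow_succ']
    ring

lemma tendsto_pow_mul_nhds_zero (hQ : ‖Q‖ < 1) (w : ℂ) :
    Tendsto (fun n : ℕ => Q ^ n * w) atTop (𝓝 0) := by
  simpa using (tendsto_pow_atTop_nhds_zero_of_norm_lt_one hQ).mul_const w

lemma qpInf_mul_eq_one_of_map_mul (hQ : ‖Q‖ < 1)
    (hg : ∀ w, ‖w‖ < 1 → g (Q * w) = (1 - w) * g w) (hg0 : Tendsto g (𝓝 0) (𝓝 1))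
    (hw : ‖w‖ < 1) : qpInf w Q * g w = 1 := by
  refine tendsto_nhds_unique ((tendsto_qp hQ w).mul_const (g w)) ?_
  simpa only [Function.comp_def, map_pow_mul_eq_qp_mul hQ.le hg hw] using
    hg0.comp (tendsto_pow_mul_nhds_zero hQ w)

lemma eq_qpInf_of_eq_one_sub_mul (hQ : ‖Q‖ < 1)
    (hg : ∀ w, ‖w‖ < 1 → g w = (1 - w) * g (Q * w)) (hg0 : Tendsto g (𝓝 0) (𝓝 1))
    (hw : ‖w‖ < 1) : g w = qpInf w Q := by
  have := (tendsto_qp hQ w).mul (hg0.comp (tendsto_pow_mul_nhds_zero hQ w))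
  rw [mul_one] at this
  exact tendsto_nhds_unique (tendsto_const_nhds.congr (eq_qp_mul_map_pow_mul hQ.le hg hw)) this

end FunctionalEquation

section Euler

variable {Q z : ℂ}

theorem tsum_inv_qp_mul_pow (hQ : ‖Q‖ < 1) (hz : ‖z‖ < 1) :
    ∑' m, (qp Q Q m)⁻¹ * z ^ m = (qpInf z Q)⁻¹ := by
  obtain ⟨B, hB⟩ := exists_norm_inv_qp_le hQ hQ
  refine eq_inv_of_mul_eq_one_right (qpInf_mul_eq_one_of_map_mul hQ
    (g := fun w => ∑' m, (qp Q Q m)⁻¹ * w ^ m) (fun w hw => ?_) ?_ hz)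
  · rw [one_sub_mul_tsum_mul_pow (summable_mul_pow_of_norm_le hB hw)
      (d := fun m => (qp Q Q m)⁻¹ * Q ^ m) (by simp) fun m => ?_]
    · simp only [mul_pow, mul_assoc]
    · have h := qp_ne_zero hQ.le hQ m
      have h' := one_sub_mul_pow_ne_zero hQ.le hQ m
      rw [qp_succ]
      field_simp
      ring
  · simpa [qp] using tendsto_tsum_mul_pow_nhds_zero hB

lemma norm_neg_one_pow_mul_pow_div_qp_le {B : ℝ} (hQ : ‖Q‖ ≤ 1) (hB : ∀ k, ‖(qp Q Q k)⁻¹‖ ≤ B)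
    (m n : ℕ) : ‖(-1) ^ m * Q ^ n / qp Q Q m‖ ≤ B := by
  rw [div_eq_mul_inv, norm_mul, norm_mul, norm_pow, norm_neg, norm_one, one_pow, one_mul,
    norm_pow]
  exact (mul_le_of_le_one_left (norm_nonneg _) (pow_le_one₀ (norm_nonneg Q) hQ)).trans (hB m)

theorem tsum_neg_one_pow_mul_pow_choose_div_qp_mul_pow (hQ : ‖Q‖ < 1) (hz : ‖z‖ < 1) :
    ∑' m, (-1) ^ m * Q ^ m.choose 2 / qp Q Q m * z ^ m = qpInf z Q := by
  obtain ⟨B, hB⟩ := exists_norm_inv_qp_le hQ hQ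
  have hc : ∀ m, ‖(-1) ^ m * Q ^ m.choose 2 / qp Q Q m‖ ≤ B := fun m =>
    norm_neg_one_pow_mul_pow_div_qp_le hQ.le hB m _
  refine eq_qpInf_of_eq_one_sub_mul hQ
    (g := fun w => ∑' m, (-1) ^ m * Q ^ m.choose 2 / qp Q Q m * w ^ m) (fun w hw => ?_) ?_ hz
  · have hQw : ‖Q * w‖ < 1 := by simpa using norm_pow_mul_lt hQ.le hw 1
    have hs := summable_mul_pow_of_norm_le hc hQw
    simp only [mul_pow, ← mul_assoc] at hs ⊢
    refine (one_sub_mul_tsum_mul_pow hs (by simp) fun m => ?_).symm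
    have h := qp_ne_zero hQ.le hQ m
    have h' := one_sub_mul_pow_ne_zero hQ.le hQ m
    rw [qp_succ, Nat.choose_succ_succ', Nat.choose_one_right]
    field_simp
    ring
  · simpa [qp] using tendsto_tsum_mul_pow_nhds_zero hc

end Euler

section Entry

variable {Q z : ℂ}

lemma summable_uncurry_neg_one_pow_mul_pow_choose_div_qp_mul_pow (hQ : ‖Q‖ < 1)
    (hz : ‖z‖ < 1) :
    Summable (Function.uncurry fun j m : ℕ =>
      (-1) ^ j * Q ^ (j + 1).choose 2 / qp Q Q j * (z * Q ^ j) ^ m) := by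
  obtain ⟨B, hB⟩ := exists_norm_inv_qp_le hQ hQ
  have hB0 : 0 ≤ B := (norm_nonneg _).trans (hB 0)
  refine .of_norm_bounded ((summable_geometric_of_lt_one (norm_nonneg Q) hQ).mul_left B
    |>.mul_of_nonneg (summable_geometric_of_lt_one (norm_nonneg z) hz)
      (fun j => by positivity) fun m => by positivity) fun ⟨j, m⟩ => ?_
  have hcoeff : ‖(-1) ^ j * Q ^ (j + 1).choose 2 / qp Q Q j‖ ≤ B * ‖Q‖ ^ j := by
    have hsplit : (-1) ^ j * Q ^ (j + 1).choose 2 / qp Q Q j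
        = (-1) ^ j * Q ^ j.choose 2 / qp Q Q j * Q ^ j := by
      rw [Nat.choose_succ_succ', Nat.choose_one_right, pow_add]
      ring
    rw [hsplit, norm_mul, norm_pow]
    exact mul_le_mul_of_nonneg_right (norm_neg_one_pow_mul_pow_div_qp_le hQ.le hB j _)
      (by positivity)
  have hgeom : ‖(z * Q ^ j) ^ m‖ ≤ ‖z‖ ^ m := by
    rw [norm_pow, norm_mul, norm_pow]
    exact pow_le_pow_left₀ (by positivity)
      (mul_le_of_le_one_right (norm_nonneg z) (pow_le_one₀ (norm_nonneg Q) hQ.le)) m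
  rw [Function.uncurry_apply_pair, norm_mul]
  exact mul_le_mul hcoeff hgeom (norm_nonneg _) (by positivity)

theorem tsum_neg_one_pow_mul_pow_div_qp_mul_one_sub (hQ : ‖Q‖ < 1) (hz : ‖z‖ < 1) :
    ∑' j : ℕ, (-1) ^ j * Q ^ (j * (j + 1) / 2) / (qp Q Q j * (1 - z * Q ^ j))
      = qpInf Q Q / qpInf z Q := by
  set F : ℕ → ℕ → ℂ := fun j m => (-1) ^ j * Q ^ (j + 1).choose 2 / qp Q Q j * (z * Q ^ j) ^ m
  have hrow (j : ℕ) :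
      (-1) ^ j * Q ^ (j * (j + 1) / 2) / (qp Q Q j * (1 - z * Q ^ j)) = ∑' m, F j m := by
    have hzQ : ‖z * Q ^ j‖ < 1 := by rw [mul_comm]; exact norm_pow_mul_lt hQ.le hz j
    rw [tsum_mul_left, tsum_geometric_of_norm_lt_one hzQ, Nat.choose_two_right, Nat.add_sub_cancel,
      mul_comm (j + 1), div_mul_eq_div_div, div_eq_mul_inv _ (1 - _)]
  have hcol (m : ℕ) : ∑' j, F j m = qpInf Q Q * ((qp Q Q m)⁻¹ * z ^ m) := by
    calc ∑' j, F j m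
        = z ^ m * ∑' j, (-1) ^ j * Q ^ j.choose 2 / qp Q Q j * (Q * Q ^ m) ^ j := by
          rw [← tsum_mul_left]
          refine tsum_congr fun j => ?_
          simp only [F]
          rw [Nat.choose_succ_succ', Nat.choose_one_right]
          ring
      _ = qpInf Q Q * ((qp Q Q m)⁻¹ * z ^ m) := by
          have hQQ : ‖Q * Q ^ m‖ < 1 := by rw [mul_comm]; exact norm_pow_mul_lt hQ.le hQ m
          rw [tsum_neg_one_pow_mul_pow_choose_div_qp_mul_pow hQ hQQ, qpInf_eq_qp_mul_qpInf hQ Q m]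
          field_simp [qp_ne_zero hQ.le hQ m]
  calc _ = ∑' j, ∑' m, F j m := tsum_congr hrow
    _ = ∑' m, ∑' j, F j m :=
        (summable_uncurry_neg_one_pow_mul_pow_choose_div_qp_mul_pow hQ hz).tsum_comm.symm
    _ = qpInf Q Q / qpInf z Q := by
        rw [tsum_congr hcol, tsum_mul_left, tsum_inv_qp_mul_pow hQ hz, div_eq_mul_inv]

end Entry

theorem entry_1_6_6_general_general (q t s a : ℂ)
    (hqt : ‖q ^ t‖ < 1)
    (haqs : ‖a * q ^ s‖ < 1) :
    ∑' j : ℕ, (-1 : ℂ) ^ j * (q ^ t) ^ (j * (j + 1) / 2) /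
        (qp (q ^ t) (q ^ t) j * (1 + a * q ^ s * (q ^ t) ^ j))
    = qpInf (q ^ t) (q ^ t) / qpInf (-a * q ^ s) (q ^ t) := by
  have hz : ‖-a * q ^ s‖ < 1 := by rwa [neg_mul, norm_neg]
  rw [← tsum_neg_one_pow_mul_pow_div_qp_mul_one_sub hqt hz]
  congr! 4
  ring

/-- common generalization of Ramanujan's Entry 1.6.6 and its
`φ(−q)` companion. -/
theorem entry_1_6_6_general (q t s a : ℂ)
    (hq : ‖q‖ < 1) (hqt : ‖q ^ t‖ < 1)
    (haqs : ‖a * q ^ s‖ < 1)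
    (h1 : ∀ j : ℕ, (1 + a * q ^ s * (q ^ t) ^ j) ≠ 0)
    (h2 : qpInf (-a * q ^ s) (q ^ t) ≠ 0) :
    ∑' j : ℕ, (-1 : ℂ) ^ j * (q ^ t) ^ (j * (j + 1) / 2) /
        (qp (q ^ t) (q ^ t) j * (1 + a * q ^ s * (q ^ t) ^ j))
    = qpInf (q ^ t) (q ^ t) / qpInf (-a * q ^ s) (q ^ t) :=
  entry_1_6_6_general_general q t s a hqt haqs
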